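/- arXiv:1306.1208 — 3 statements merged into one kernel-verified Lean document; each statement's English description precedes it below -/
import Mathlib

section
/- Let h ∈ ℂ[[x,y]] be a formal power series. Suppose h = u · ∏_{i=1}^m (x − σ_i(y)) = u' · ∏_{i=1}^{m'} (x − σ'_i(y)) where u, u' are units of ℂ[[x,y]] and σ_1,…,σ_m, σ'_1,…,σ'_{m'} ∈ ℂ[[y]] all have zero constant term. Then m = m', u = u', and there is a permutation π of {1,…,m} such that σ'_i = σ_{π(i)} for every i. -/
/-!
Both sides are Weierstrass factorizations of `h` over the complete local ring `ℂ[[y]]`: since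
every `σᵢ` lies in the maximal ideal, `∏ (x - σᵢ)` is a distinguished polynomial. Uniqueness in the
Weierstrass preparation theorem gives `u = u'` and equality of the two polynomials, and since
`ℂ[[y]]` is a domain the `σᵢ` are recovered, with multiplicities, as the roots of that polynomial.
-/

/-- `ℂ[[x,y]]`, viewed as power series in `x` whose coefficients are
power series in `y`. -/
abbrev CXY : Type := PowerSeries (PowerSeries ℂ)

open IsLocalRing

theorem Polynomial.isDistinguishedAt_X_sub_C {R : Type*} [CommRing R] {I : Ideal R} {a : R}
    (ha : a ∈ I) : (X - C a).IsDistinguishedAt I where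
  monic := monic_X_sub_C a
  mem {n} hn := by
    have hn0 : n = 0 := by have := natDegree_X_sub_C_le (R := R) (r := a); omega
    simpa [hn0] using ha

theorem Polynomial.isDistinguishedAt_multiset_prod_X_sub_C {R : Type*} [CommRing R]
    {I : Ideal R} {s : Multiset R} (hs : ∀ a ∈ s, a ∈ I) :
    (s.map fun a ↦ X - C a).prod.IsDistinguishedAt I := by
  induction s using Multiset.induction_on with
  | empty => exact ⟨⟨fun hn ↦ by simp at hn⟩, monic_one⟩
  | cons a s ih =>
    rw [Multiset.map_cons, Multiset.prod_cons]
    exact (isDistinguishedAt_X_sub_C (hs a (Multiset.mem_cons_self a s))).mul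
      (ih fun b hb ↦ hs b (Multiset.mem_cons_of_mem hb))

namespace PowerSeries

theorem coe_multiset_prod_X_sub_C {R : Type*} [CommRing R] (s : Multiset R) :
    (((s.map fun a ↦ Polynomial.X - Polynomial.C a).prod : Polynomial R) : PowerSeries R) =
      (s.map fun a ↦ X - C a).prod := by
  rw [← Polynomial.coeToPowerSeries.ringHom_apply, map_multiset_prod, Multiset.map_map]
  simp [Function.comp_def]

theorem eq_of_mul_multiset_prod_X_sub_C_eq {A : Type*} [CommRing A] [IsDomain A]
    [IsLocalRing A] [IsHausdorff (maximalIdeal A) A] {s s' : Multiset A} {u u' : PowerSeries A}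
    (hu : IsUnit u) (hu' : IsUnit u') (hs : ∀ a ∈ s, a ∈ maximalIdeal A)
    (hs' : ∀ a ∈ s', a ∈ maximalIdeal A)
    (h : u * (s.map fun a ↦ X - C a).prod = u' * (s'.map fun a ↦ X - C a).prod) :
    s = s' ∧ u = u' := by
  rw [← coe_multiset_prod_X_sub_C, ← coe_multiset_prod_X_sub_C] at h
  have H : IsWeierstrassFactorization (u * _) _ u :=
    ⟨Polynomial.isDistinguishedAt_multiset_prod_X_sub_C hs, hu, mul_comm _ _⟩
  have H' : IsWeierstrassFactorization (u * _) _ u' :=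
    ⟨Polynomial.isDistinguishedAt_multiset_prod_X_sub_C hs', hu', h.trans (mul_comm _ _)⟩
  obtain ⟨hprod, rfl⟩ := H.elim H'
  refine ⟨?_, rfl⟩
  rw [← Polynomial.roots_multiset_prod_X_sub_C s, hprod, Polynomial.roots_multiset_prod_X_sub_C]

end PowerSeries

theorem Fintype.exists_equiv_comp_eq_of_map_univ_eq {ι κ α : Type*} [Fintype ι] [Fintype κ]
    {f : ι → α} {g : κ → α} (h : Finset.univ.val.map f = Finset.univ.val.map g) :
    ∃ e : κ ≃ ι, ∀ k, f (e k) = g k := by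
  classical
  have hfiber (a : α) : Fintype.card {k // g k = a} = Fintype.card {i // f i = a} := by
    have := congrArg (Multiset.count a) h
    simp only [Multiset.count_map, eq_comm (a := a)] at this
    simpa [Fintype.card_subtype, Finset.card_def, Finset.filter_val] using this.symm
  exact ⟨Equiv.ofFiberEquiv fun a ↦ Fintype.equivOfCardEq (hfiber a), Equiv.ofFiberEquiv_map _⟩

/-- **Uniqueness in Newton's factorization.** If
`h = u · ∏_{i=1}^{m}(x - σᵢ(y)) = u' · ∏_{i=1}^{m'}(x - σ'ᵢ(y))` with `u, u'`
units of `ℂ[[x,y]]` and all `σᵢ, σ'ᵢ ∈ ℂ[[y]]` of zero constant term, then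
`m = m'`, `u = u'`, and the `σ'ᵢ` are a permutation of the `σᵢ`. -/
theorem stmt1 (h : CXY) (m m' : ℕ) (u u' : CXY)
    (σ : Fin m → PowerSeries ℂ) (σ' : Fin m' → PowerSeries ℂ)
    (hu : IsUnit u) (hu' : IsUnit u')
    (hσ : ∀ i, PowerSeries.constantCoeff (σ i) = 0)
    (hσ' : ∀ i, PowerSeries.constantCoeff (σ' i) = 0)
    (h1 : h = u * ∏ i : Fin m,
        (PowerSeries.X - PowerSeries.C (σ i)))
    (h2 : h = u' * ∏ i : Fin m',
        (PowerSeries.X - PowerSeries.C (σ' i))) :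
    m = m' ∧ u = u' ∧
      ∃ π : Fin m' → Fin m, Function.Bijective π ∧ ∀ i, σ' i = σ (π i) := by
  have hmem {n : ℕ} {τ : Fin n → PowerSeries ℂ} (hτ : ∀ i, PowerSeries.constantCoeff (τ i) = 0) :
      ∀ a ∈ Finset.univ.val.map τ, a ∈ maximalIdeal (PowerSeries ℂ) := by
    simpa [← PowerSeries.ker_coeff_eq_max_ideal] using hτ
  obtain ⟨hroots, rfl⟩ := PowerSeries.eq_of_mul_multiset_prod_X_sub_C_eq hu hu' (hmem hσ)
    (hmem hσ')
    (by simp only [Multiset.map_map, Function.comp_def, Finset.prod_map_val, ← h1, ← h2])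
  obtain ⟨π, hπ⟩ := Fintype.exists_equiv_comp_eq_of_map_univ_eq hroots
  exact ⟨by simpa using (Fintype.card_congr π).symm, rfl, π, π.bijective, fun i ↦ (hπ i).symm⟩
end

section
/- Let n ≥ 1 and let f ∈ ℂ[[z_1,…,z_n]] be a formal power series of order m ≥ 2 in which the monomial z_1^m occurs with nonzero coefficient. Let φ_1,…,φ_n ∈ ℂ[[t]] have zero constant term, and define F(t,s) := f(φ_1(t) + s·t, φ_2(t), …, φ_n(t)) ∈ ℂ[[t,s]]. Then t^m divides F in ℂ[[t,s]], and the coefficient of the monomial t^m s^m in F is nonzero (it equals the coefficient of z_1^m in f); in particular t^{m+1} does not divide F. -/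
/-- `ℂ[[t,s]]`, viewed as power series in `t` whose coefficients are
power series in `s`. -/
abbrev CTS : Type := PowerSeries (PowerSeries ℂ)

/-- Substitution of power series `g j ∈ S[[t]]` (each of which is assumed,
for this definition to be the true substitution, to have zero constant
term in `t`) into `f ∈ ℂ[[z_0,…,z_n]]`, defined coefficientwise:
the coefficient of `t^k` in `f(g)` is the (finite) sum, over the
multi-exponents `d` with `d j ≤ k` for all `j`, of
`(coeff d f) • coeff_k (∏ j, (g j)^(d j))`.  (Exponents `d` of total degree
`> k` contribute `0` since each `g j` is divisible by `t`.) -/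
noncomputable def substArc {n : ℕ} {S : Type} [CommRing S] [Algebra ℂ S]
    (g : Fin (n + 1) → PowerSeries S) (f : MvPowerSeries (Fin (n + 1)) ℂ) :
    PowerSeries S :=
  PowerSeries.mk fun k =>
    ∑ d ∈ Finset.Iic (Finsupp.equivFunOnFinite.symm fun _ : Fin (n + 1) => k),
      MvPowerSeries.coeff (R := ℂ) d f • PowerSeries.coeff (R := S) k (∏ j, g j ^ d j)

/-- The image of `φ(t) ∈ ℂ[[t]]` in `ℂ[[t,s]]`. -/
noncomputable def embT (φ : PowerSeries ℂ) : CTS :=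
  PowerSeries.map (PowerSeries.C (R := ℂ)) φ

/-- The variable `s` as an element of `ℂ[[t,s]]`. -/
noncomputable def sVar : CTS := PowerSeries.C (R := PowerSeries ℂ) PowerSeries.X

/-- The substitution `F(t,s) = f(φ_0(t) + w, φ_1(t), …, φ_n(t)) ∈ ℂ[[t,s]]`,
where `w ∈ ℂ[[t,s]]` is the perturbation added to the first coordinate. -/
noncomputable def deformSubst {n : ℕ} (φ : Fin (n + 1) → PowerSeries ℂ)
    (w : CTS) (f : MvPowerSeries (Fin (n + 1)) ℂ) : CTS :=
  substArc (fun j => if j = 0 then embT (φ 0) + w else embT (φ j)) f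

/-!
Write `g` for the arguments substituted into `f`. Every `g j` is divisible by `t`, so a monomial
`z^d` of total degree `|d|` contributes to `F` only in `t`-degrees `≥ |d|`, and its contribution in
`t`-degree exactly `|d|` is `∏ j, (g j)'(0) ^ d j`. As `f` has order `m`, this gives `t^m ∣ F` and
expresses the `t^m`-coefficient of `F` as the degree-`m` form of `f` evaluated at the linear
coefficients `(φ_0'(0) + s, φ_1'(0), …, φ_n'(0))`. Only the first of these involves `s`, and only
linearly, so the coefficient of `s^m` in that form picks out exactly the monomial `z_0^m`.
-/

open PowerSeries

namespace PowerSeries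

variable {R : Type*}

theorem coeff_C_add_X_pow [CommSemiring R] (a : R) (k m : ℕ) :
    coeff m ((C a + X) ^ k) = a ^ (k - m) * k.choose m := by
  have hcoe : (C a + X : R⟦X⟧) = ((Polynomial.X + Polynomial.C a : Polynomial R) : R⟦X⟧) := by
    rw [Polynomial.coe_add, Polynomial.coe_X, Polynomial.coe_C, add_comm]
  rw [hcoe, ← Polynomial.coe_pow, Polynomial.coeff_coe, Polynomial.coeff_X_add_C_pow]

variable [CommRing R] {ι : Type*} [Fintype ι] {g : ι → R⟦X⟧}

theorem prod_pow_eq_X_pow_mul (hg : ∀ j, constantCoeff (g j) = 0) (d : ι → ℕ) :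
    ∏ j, g j ^ d j = X ^ (∑ j, d j) * ∏ j, (mk fun p => coeff (p + 1) (g j)) ^ d j := by
  have hX (j : ι) : g j = X * mk fun p => coeff (p + 1) (g j) := by
    simpa [hg j] using sub_const_eq_X_mul_shift (g j)
  conv_lhs => rw [funext hX]
  simp only [mul_pow, Finset.prod_mul_distrib, Finset.prod_pow_eq_pow_sum]

theorem coeff_prod_pow_of_lt_sum (hg : ∀ j, constantCoeff (g j) = 0) {d : ι → ℕ} {k : ℕ}
    (hk : k < ∑ j, d j) : coeff k (∏ j, g j ^ d j) = 0 := by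
  rw [prod_pow_eq_X_pow_mul hg, coeff_X_pow_mul', if_neg (not_le.mpr hk)]

theorem coeff_sum_prod_pow (hg : ∀ j, constantCoeff (g j) = 0) (d : ι → ℕ) :
    coeff (∑ j, d j) (∏ j, g j ^ d j) = ∏ j, coeff 1 (g j) ^ d j := by
  rw [prod_pow_eq_X_pow_mul hg, coeff_X_pow_mul', if_pos le_rfl, Nat.sub_self,
    coeff_zero_eq_constantCoeff, map_prod]
  simp only [map_pow, ← coeff_zero_eq_constantCoeff, coeff_mk]

end PowerSeries

theorem Finsupp.apply_lt_of_sum_eq_of_ne_single {ι : Type*} [Fintype ι] {d : ι →₀ ℕ} {m : ℕ}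
    {i : ι} (hsum : ∑ j, d j = m) (hne : d ≠ Finsupp.single i m) : d i < m := by
  have hle : d i ≤ m := hsum ▸ Finset.single_le_sum (fun _ _ => Nat.zero_le _) (Finset.mem_univ i)
  refine lt_of_le_of_ne hle fun hi => hne (Finsupp.ext fun j => ?_)
  rcases eq_or_ne j i with rfl | hji
  · simp [hi]
  · have := Finset.add_le_sum (f := fun j => d j) (fun _ _ => Nat.zero_le _) (Finset.mem_univ j)
      (Finset.mem_univ i) hji
    simp only [Finsupp.single_eq_of_ne hji]
    omega

section substArc

variable {n : ℕ} {S : Type} [CommRing S] [Algebra ℂ S] {g : Fin (n + 1) → S⟦X⟧}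
  {f : MvPowerSeries (Fin (n + 1)) ℂ} {m : ℕ}

theorem X_pow_dvd_substArc (hg : ∀ j, constantCoeff (g j) = 0)
    (hord : ∀ d : Fin (n + 1) →₀ ℕ, ∑ j, d j < m → MvPowerSeries.coeff d f = 0) :
    X ^ m ∣ substArc g f := by
  refine X_pow_dvd_iff.mpr fun k hk => ?_
  rw [substArc, coeff_mk]
  refine Finset.sum_eq_zero fun d _ => ?_
  rcases lt_or_ge k (∑ j, d j) with hlt | hge
  · rw [coeff_prod_pow_of_lt_sum hg hlt, smul_zero]
  · rw [hord d (by omega), zero_smul]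

theorem coeff_substArc_eq_sum_finsuppAntidiag (hg : ∀ j, constantCoeff (g j) = 0)
    (hord : ∀ d : Fin (n + 1) →₀ ℕ, ∑ j, d j < m → MvPowerSeries.coeff d f = 0) :
    coeff m (substArc g f) = ∑ d ∈ Finset.finsuppAntidiag Finset.univ m,
      MvPowerSeries.coeff d f • ∏ j, coeff 1 (g j) ^ d j := by
  have hsub : Finset.finsuppAntidiag Finset.univ m ⊆
      Finset.Iic (Finsupp.equivFunOnFinite.symm fun _ : Fin (n + 1) => m) := by
    intro d hd
    rw [Finset.mem_finsuppAntidiag] at hd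
    rw [Finset.mem_Iic, Finsupp.le_def]
    intro j
    simpa [← hd.1] using Finset.single_le_sum (fun _ _ => Nat.zero_le _) (Finset.mem_univ j)
  rw [substArc, coeff_mk, ← Finset.sum_subset hsub fun d _ hd => ?_]
  · refine Finset.sum_congr rfl fun d hd => ?_
    rw [← (Finset.mem_finsuppAntidiag.mp hd).1, coeff_sum_prod_pow hg]
  · have hd : ∑ j, d j ≠ m := by simpa using hd
    rcases lt_or_gt_of_ne hd with hlt | hgt
    · rw [hord d hlt, zero_smul]
    · rw [coeff_prod_pow_of_lt_sum hg hgt, smul_zero]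

end substArc

theorem coeff_embT (ψ : ℂ⟦X⟧) (k : ℕ) : coeff k (embT ψ) = C (coeff k ψ) :=
  coeff_map _ _ _

theorem constantCoeff_embT (ψ : ℂ⟦X⟧) : constantCoeff (embT ψ) = C (constantCoeff ψ) := by
  rw [← coeff_zero_eq_constantCoeff_apply, coeff_embT, coeff_zero_eq_constantCoeff_apply]

theorem coeff_sVar_mul_X (k : ℕ) : coeff k (sVar * X) = if k = 1 then X else 0 := by
  cases k <;> simp [sVar, coeff_succ_mul_X, coeff_C]

noncomputable def deformArgs {n : ℕ} (φ : Fin (n + 1) → ℂ⟦X⟧) (w : CTS) (j : Fin (n + 1)) : CTS :=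
  if j = 0 then embT (φ 0) + w else embT (φ j)

section deformArgs

variable {n : ℕ} {φ : Fin (n + 1) → ℂ⟦X⟧}

theorem deformSubst_eq_substArc (w : CTS) (f : MvPowerSeries (Fin (n + 1)) ℂ) :
    deformSubst φ w f = substArc (deformArgs φ w) f :=
  rfl

theorem constantCoeff_deformArgs (hφ : ∀ j, constantCoeff (φ j) = 0) (j : Fin (n + 1)) :
    constantCoeff (deformArgs φ (sVar * X) j) = 0 := by
  rw [deformArgs]
  split_ifs <;> simp [constantCoeff_embT, hφ, sVar]

theorem coeff_prod_coeff_one_deformArgs (d : Fin (n + 1) → ℕ) (m : ℕ) :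
    coeff m (∏ j, coeff 1 (deformArgs φ (sVar * X) j) ^ d j) =
      coeff 1 (φ 0) ^ (d 0 - m) * (d 0).choose m * ∏ i : Fin n, coeff 1 (φ i.succ) ^ d i.succ := by
  simp only [Fin.prod_univ_succ, deformArgs, Fin.succ_ne_zero, if_true, if_false, map_add,
    coeff_embT, coeff_sVar_mul_X, ← map_pow, ← map_prod, coeff_mul_C, coeff_C_add_X_pow]

theorem coeff_coeff_deformSubst {f : MvPowerSeries (Fin (n + 1)) ℂ} {m : ℕ}
    (hord : ∀ d : Fin (n + 1) →₀ ℕ, ∑ j, d j < m → MvPowerSeries.coeff d f = 0)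
    (hφ : ∀ j, constantCoeff (φ j) = 0) :
    coeff m (coeff m (deformSubst φ (sVar * X) f)) =
      MvPowerSeries.coeff (Finsupp.single 0 m) f := by
  have hmem : Finsupp.single (0 : Fin (n + 1)) m ∈ Finset.finsuppAntidiag Finset.univ m := by simp
  rw [deformSubst_eq_substArc, coeff_substArc_eq_sum_finsuppAntidiag (constantCoeff_deformArgs hφ)
    hord, map_sum, Finset.sum_eq_single_of_mem _ hmem fun d hd hne => ?_]
  · rw [coeff_smul, coeff_prod_coeff_one_deformArgs]
    simp [Fin.succ_ne_zero]
  · have hd0 := Finsupp.apply_lt_of_sum_eq_of_ne_single (Finset.mem_finsuppAntidiag.mp hd).1 hne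
    rw [coeff_smul, coeff_prod_coeff_one_deformArgs, Nat.choose_eq_zero_of_lt hd0]
    simp

end deformArgs

theorem stmt4_general (n : ℕ) (f : MvPowerSeries (Fin (n + 1)) ℂ) (m : ℕ)
    (hord : ∀ d : Fin (n + 1) →₀ ℕ,
      (d.sum fun _ e => e) < m → MvPowerSeries.coeff (R := ℂ) d f = 0)
    (hz : MvPowerSeries.coeff (R := ℂ) (Finsupp.single 0 m) f ≠ 0)
    (φ : Fin (n + 1) → PowerSeries ℂ)
    (hφ : ∀ j, PowerSeries.constantCoeff (R := ℂ) (φ j) = 0) :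
    (PowerSeries.X : CTS) ^ m ∣ deformSubst φ (sVar * PowerSeries.X) f ∧
    PowerSeries.coeff (R := ℂ) m
        (PowerSeries.coeff (R := PowerSeries ℂ) m (deformSubst φ (sVar * PowerSeries.X) f))
      = MvPowerSeries.coeff (R := ℂ) (Finsupp.single 0 m) f ∧
    PowerSeries.coeff (R := ℂ) m
        (PowerSeries.coeff (R := PowerSeries ℂ) m (deformSubst φ (sVar * PowerSeries.X) f)) ≠ 0 ∧
    ¬ (PowerSeries.X : CTS) ^ (m + 1) ∣ deformSubst φ (sVar * PowerSeries.X) f := by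
  have hord' (d : Fin (n + 1) →₀ ℕ) (hd : ∑ j, d j < m) : MvPowerSeries.coeff d f = 0 :=
    hord d (by rwa [Finsupp.sum_fintype _ _ fun _ => rfl])
  have hcoeff := coeff_coeff_deformSubst hord' hφ
  refine ⟨X_pow_dvd_substArc (constantCoeff_deformArgs hφ) hord', hcoeff, hcoeff ▸ hz,
    fun hdvd => hz ?_⟩
  rw [← hcoeff, X_pow_dvd_iff.mp hdvd m m.lt_succ_self, map_zero]

/-- Let `f ∈ ℂ[[z_0,…,z_n]]` have order `m ≥ 2`, with `z_0^m` occurring with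
nonzero coefficient, and let `φ_0,…,φ_n ∈ ℂ[[t]]` have zero constant term.
Set `F(t,s) := f(φ_0(t) + s·t, φ_1(t), …, φ_n(t))`.  Then `t^m ∣ F`, the
coefficient of `t^m s^m` in `F` equals the coefficient of `z_0^m` in `f`
and is nonzero, and `t^(m+1) ∤ F`. -/
theorem stmt4 (n : ℕ) (f : MvPowerSeries (Fin (n + 1)) ℂ) (m : ℕ) (hm : 2 ≤ m)
    (hord : ∀ d : Fin (n + 1) →₀ ℕ,
      (d.sum fun _ e => e) < m → MvPowerSeries.coeff (R := ℂ) d f = 0)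
    (hz : MvPowerSeries.coeff (R := ℂ) (Finsupp.single 0 m) f ≠ 0)
    (φ : Fin (n + 1) → PowerSeries ℂ)
    (hφ : ∀ j, PowerSeries.constantCoeff (R := ℂ) (φ j) = 0) :
    (PowerSeries.X : CTS) ^ m ∣ deformSubst φ (sVar * PowerSeries.X) f ∧
    PowerSeries.coeff (R := ℂ) m
        (PowerSeries.coeff (R := PowerSeries ℂ) m (deformSubst φ (sVar * PowerSeries.X) f))
      = MvPowerSeries.coeff (R := ℂ) (Finsupp.single 0 m) f ∧
    PowerSeries.coeff (R := ℂ) m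
        (PowerSeries.coeff (R := PowerSeries ℂ) m (deformSubst φ (sVar * PowerSeries.X) f)) ≠ 0 ∧
    ¬ (PowerSeries.X : CTS) ^ (m + 1) ∣ deformSubst φ (sVar * PowerSeries.X) f :=
  stmt4_general n f m hord hz φ hφ
end

section
/- Let r ≥ 1 and let Φ : ℂ × ℂ → ℂ^r be continuous on D̄ × D, where D̄ = {t ∈ ℂ : |t| ≤ 1} and D = {s ∈ ℂ : |s| < 1}, with Φ(0,s) = 0 for all s ∈ D. Assume: (i) the only t ∈ D̄ with Φ(t,0) = 0 is t = 0; (ii) there is an index i such that Φ_i(t,s) = Φ_i(t,0) for all (t,s) ∈ D̄ × D, and the function t ↦ Φ_i(t,0) is holomorphic on an open neighborhood of D̄ and is not identically zero. Then there exists ε > 0 such that for every s ∈ ℂ with |s| < ε, the only t ∈ D̄ with Φ(t,s) = 0 is t = 0. -/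
/-!
The coordinate `Φᵢ(·, 0)` is analytic and not identically zero on the connected compact disc `D̄`,
so it has only finitely many zeros there. Every `s`-slice zero `t` of `Φ` is a zero of `Φᵢ(·, s) = Φᵢ(·, 0)`,
hence lies in this finite set. At each of its nonzero points `Φ(t, 0) ≠ 0`, and by continuity
in `s` this persists for all small `s`, uniformly since there are finitely many points.
-/

open Metric Filter Topology

theorem AnalyticOnNhd.finite_zeros_of_isCompact {𝕜 E : Type*} [NontriviallyNormedField 𝕜]
    [NormedAddCommGroup E] [NormedSpace 𝕜 E] {f : 𝕜 → E} {K : Set 𝕜}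
    (hf : AnalyticOnNhd 𝕜 f K) (hK : IsCompact K) (hK' : IsPreconnected K)
    (hnz : ∃ z ∈ K, f z ≠ 0) : {z ∈ K | f z = 0}.Finite := by
  rcases hf.eqOn_zero_or_eventually_ne_zero_of_preconnected hK' with hzero | hcodiscrete
  · obtain ⟨z, hz, hfz⟩ := hnz
    exact absurd (hzero hz) hfz
  · exact (hK.finite_sdiff_of_mem_codiscreteWithin hcodiscrete).subset
      fun z hz => ⟨hz.1, not_not.2 hz.2⟩

theorem ContinuousOn.eventually_forall_ne_of_finite {X Y E : Type*} [TopologicalSpace X]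
    [TopologicalSpace Y] [TopologicalSpace E] [T1Space E] {Φ : X × Y → E} {K S : Set X}
    {V : Set Y} {y₀ : Y} {c : E} (hΦ : ContinuousOn Φ (K ×ˢ V)) (hV : V ∈ 𝓝 y₀)
    (hS : S.Finite) (hSK : S ⊆ K) (hne : ∀ t ∈ S, Φ (t, y₀) ≠ c) :
    ∀ᶠ y in 𝓝 y₀, ∀ t ∈ S, Φ (t, y) ≠ c := by
  refine (eventually_all_finite hS).2 fun t ht => ?_
  have hslice : ContinuousOn (fun y => Φ (t, y)) V :=
    hΦ.comp (Continuous.prodMk_right t).continuousOn fun y hy => ⟨hSK ht, hy⟩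
  exact (hslice.continuousAt hV).eventually_ne (hne t ht)

theorem stmt9_general (r : ℕ) (Φ : ℂ × ℂ → Fin r → ℂ)
    (hcont : ContinuousOn Φ (closedBall (0 : ℂ) 1 ×ˢ ball (0 : ℂ) 1))
    (hzero : ∀ t ∈ closedBall (0 : ℂ) 1, Φ (t, 0) = 0 → t = 0)
    (i : Fin r)
    (hind : ∀ t ∈ closedBall (0 : ℂ) 1, ∀ s ∈ ball (0 : ℂ) 1,
      Φ (t, s) i = Φ (t, 0) i)
    (hhol : AnalyticOnNhd ℂ (fun t : ℂ => Φ (t, 0) i) (closedBall (0 : ℂ) 1))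
    (hnz : ∃ t ∈ closedBall (0 : ℂ) 1, Φ (t, 0) i ≠ 0) :
    ∃ ε > (0 : ℝ), ∀ s : ℂ, ‖s‖ < ε →
      ∀ t ∈ closedBall (0 : ℂ) 1, Φ (t, s) = 0 → t = 0 := by
  set Z := {t ∈ closedBall (0 : ℂ) 1 | Φ (t, 0) i = 0}
  have hZ : Z.Finite := hhol.finite_zeros_of_isCompact (isCompact_closedBall 0 1)
    (convex_closedBall 0 1).isPreconnected hnz
  have hball : ball (0 : ℂ) 1 ∈ 𝓝 0 := ball_mem_nhds 0 one_pos
  have hsmall : ∀ᶠ s in 𝓝 (0 : ℂ), (∀ t ∈ Z \ {0}, Φ (t, s) ≠ 0) ∧ s ∈ ball (0 : ℂ) 1 :=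
    (hcont.eventually_forall_ne_of_finite hball hZ.sdiff (fun t ht => ht.1.1)
      fun t ht h => ht.2 (hzero t ht.1.1 h)).and hball
  obtain ⟨ε, hε, hε_small⟩ := Metric.eventually_nhds_iff.1 hsmall
  refine ⟨ε, hε, fun s hs t ht hΦ => by_contra fun ht0 => ?_⟩
  obtain ⟨hne, hs1⟩ := hε_small (by rwa [dist_zero_right])
  have hti : Φ (t, 0) i = 0 := by rw [← hind t ht s hs1, hΦ, Pi.zero_apply]
  exact hne t ⟨⟨ht, hti⟩, ht0⟩ hΦ

/-- If `Φ : ℂ × ℂ → ℂ^r` is continuous on `D̄ × D`, vanishes on `{0} × D`,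
its zero set in `D̄ × {0}` is `{0}`, and some coordinate `Φᵢ` is independent
of `s`, holomorphic on a neighborhood of `D̄` and not identically zero, then
for all sufficiently small `s` the only zero of `Φ(·,s)` in `D̄` is `t = 0`. -/
theorem stmt9 (r : ℕ) (hr : 1 ≤ r) (Φ : ℂ × ℂ → Fin r → ℂ)
    (hcont : ContinuousOn Φ (closedBall (0 : ℂ) 1 ×ˢ ball (0 : ℂ) 1))
    (h0 : ∀ s ∈ ball (0 : ℂ) 1, Φ (0, s) = 0)
    (hzero : ∀ t ∈ closedBall (0 : ℂ) 1, Φ (t, 0) = 0 → t = 0)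
    (i : Fin r)
    (hind : ∀ t ∈ closedBall (0 : ℂ) 1, ∀ s ∈ ball (0 : ℂ) 1,
      Φ (t, s) i = Φ (t, 0) i)
    (hhol : AnalyticOnNhd ℂ (fun t : ℂ => Φ (t, 0) i) (closedBall (0 : ℂ) 1))
    (hnz : ∃ t ∈ closedBall (0 : ℂ) 1, Φ (t, 0) i ≠ 0) :
    ∃ ε > (0 : ℝ), ∀ s : ℂ, ‖s‖ < ε →
      ∀ t ∈ closedBall (0 : ℂ) 1, Φ (t, s) = 0 → t = 0 :=
  stmt9_general r Φ hcont hzero i hind hhol hnz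
end
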